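/- arXiv:2605.05592 — 2 statements merged into one kernel-verified Lean document; each statement's English description precedes it below -/
import Mathlib

section
/- Two probability measures Π₁, Π₂ on [0,1] induce the same odd-budget majority voting curve, i.e., V_n(Π₁) = V_n(Π₂) for all n ≥ 0, if and only if their signed voting signatures coincide: ω_{Π₁} = ω_{Π₂}. -/
open MeasureTheory

/-- Odd-budget majority accuracy: `P n q = ℙ(Bin(2n+1,q) ≥ n+1)`. -/
noncomputable def majP (n : ℕ) (q : ℝ) : ℝ :=
  ∑ j ∈ Finset.Icc (n+1) (2*n+1), ((2*n+1).choose j : ℝ) * q^j * (1-q)^(2*n+1-j)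

/-- Population voting curve. -/
noncomputable def voteV (μ : Measure ℝ) (n : ℕ) : ℝ := ∫ q, majP n q ∂μ

lemma aux_fin (μ : Measure ℝ) [IsFiniteMeasure μ] (g : ℝ → ℝ) (hg : ∀ q ∈ Set.Icc (0:ℝ) 1, g q ≤ 1) :
    IsFiniteMeasure ((μ.restrict (Set.Icc 0 1)).withDensity (fun q => ENNReal.ofReal (g q))) := by
  apply isFiniteMeasure_withDensity
  have h : ∫⁻ q, ENNReal.ofReal (g q) ∂(μ.restrict (Set.Icc 0 1)) ≤ ∫⁻ _, 1 ∂(μ.restrict (Set.Icc 0 1)) := by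
    refine setLIntegral_mono' measurableSet_Icc fun q hq => ?_
    simpa using ENNReal.ofReal_le_one.2 (hg q hq)
  refine ne_of_lt (lt_of_le_of_lt h ?_)
  simp [lintegral_one]

/-- Signed voting signature as a signed measure on ℝ (carried on [0,1/4]). -/
noncomputable def signature (μ : Measure ℝ) [IsFiniteMeasure μ] : SignedMeasure ℝ :=
  letI h1 := aux_fin μ (fun q => 2*q-1) (by intro q hq; simp only [Set.mem_Icc] at hq; linarith [hq.2])
  letI h2 := aux_fin μ (fun q => 1-2*q) (by intro q hq; simp only [Set.mem_Icc] at hq; linarith [hq.1])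
  (((μ.restrict (Set.Icc 0 1)).withDensity (fun q => ENNReal.ofReal (2*q-1))).map
      (fun q => q*(1-q))).toSignedMeasure
  - (((μ.restrict (Set.Icc 0 1)).withDensity (fun q => ENNReal.ofReal (1-2*q))).map
      (fun q => q*(1-q))).toSignedMeasure

/-- Integral of a real function against a signed measure, via the Jordan decomposition. -/
noncomputable def sInt {α : Type*} [MeasurableSpace α] (s : SignedMeasure α) (f : α → ℝ) : ℝ :=
  (∫ a, f a ∂s.toJordanDecomposition.posPart) - ∫ a, f a ∂s.toJordanDecomposition.negPart

/-- Limiting majority accuracy. -/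
noncomputable def voteVinf (μ : Measure ℝ) : ℝ :=
  (μ (Set.Ioc (1/2 : ℝ) 1)).toReal + (1/2) * (μ {(1/2 : ℝ)}).toReal

/-- Total-variation norm of the signed voting signature. -/
noncomputable def sigTV (μ : Measure ℝ) [IsFiniteMeasure μ] : ℝ :=
  ((signature μ).totalVariation Set.univ).toReal

/-!
Write `s = q(1-q)`. Adding two voters changes the majority accuracy by
`P_{n+1}(q) - P_n(q) = C(2n+1,n) (2q-1) s^{n+1}`: both sides vanish at `q = 0` and have the same
derivative, since `P_n' = (2n+1) C(2n,n) s^n`. Together with `P_0(q) = 1/2 + (2q-1)/2`, this shows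
that the curve `n ↦ V_n(Π)` and the moments `∫ s^k dω_Π` determine each other. The signature is a
finite signed measure carried by `[0,1/4]`, so by Weierstrass approximation it is determined by its
moments.
-/

open Polynomial Set

noncomputable def majPoly (n : ℕ) : ℝ[X] :=
  ∑ j ∈ Finset.Icc (n + 1) (2 * n + 1), bernsteinPolynomial ℝ (2 * n + 1) j

lemma majP_eq_eval (n : ℕ) (q : ℝ) : majP n q = (majPoly n).eval q := by
  simp [majP, majPoly, bernsteinPolynomial, eval_finsetSum]

lemma majP_zero (q : ℝ) : majP 0 q = q := by
  simp [majP]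

lemma majPoly_eval_zero (n : ℕ) : (majPoly n).eval 0 = 0 := by
  rw [majPoly, eval_finsetSum]
  refine Finset.sum_eq_zero fun j hj => ?_
  rw [bernsteinPolynomial.eval_at_0, if_neg]
  simp at hj; omega

lemma derivative_majPoly (n : ℕ) :
    derivative (majPoly n) = (2 * n + 1 : ℝ[X]) * bernsteinPolynomial ℝ (2 * n) n := by
  have hIcc : Finset.Icc (n + 1) (2 * n + 1) = Finset.Ico (n + 1) (n + 1 + (n + 1)) := by
    ext j; simp; omega
  rw [majPoly, hIcc, Finset.sum_Ico_eq_sum_range, derivative_sum, Nat.add_sub_cancel_left]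
  simp_rw [show ∀ i, n + 1 + i = (n + i) + 1 from fun i => by omega,
    bernsteinPolynomial.derivative_succ_aux, ← Finset.mul_sum]
  erw [Finset.sum_range_sub' (fun i => bernsteinPolynomial ℝ (2 * n) (n + i))]
  rw [bernsteinPolynomial.eq_zero_of_lt ℝ (by omega : 2 * n < n + (n + 1))]
  push_cast
  ring_nf

lemma eq_zero_of_derivative_eq_zero_of_eval_zero {p : ℝ[X]} (hd : derivative p = 0)
    (h0 : p.eval 0 = 0) : p = 0 := by
  rw [eq_C_of_derivative_eq_zero hd, coeff_zero_eq_eval_zero, h0, C_0]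

lemma majPoly_succ_sub (n : ℕ) :
    majPoly (n + 1) - majPoly n
      = ((2 * n + 1).choose n : ℝ[X]) * (2 * X - 1) * (X * (1 - X)) ^ (n + 1) := by
  rw [← sub_eq_zero]
  apply eq_zero_of_derivative_eq_zero_of_eval_zero
  · have h₁ : (2 * (n + 1)).choose (n + 1) = 2 * (2 * n + 1).choose n := by
      rw [show 2 * (n + 1) = 2 * n + 1 + 1 by ring, Nat.choose_succ_succ', Nat.choose_symm_half]
      ring
    have h₂ : (2 * n + 1) * (2 * n).choose n = (2 * n + 1).choose n * (n + 1) := by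
      rw [Nat.add_one_mul_choose_eq, Nat.choose_symm_half]
    simp only [derivative_sub, derivative_majPoly, bernsteinPolynomial, derivative_mul,
      derivative_pow_succ, derivative_X, derivative_one, derivative_natCast, derivative_ofNat,
      show 2 * (n + 1) - (n + 1) = n + 1 by omega, show 2 * n - n = n by omega, h₁]
    have h₂' := congrArg (fun m : ℕ => (m : ℝ[X])) h₂
    push_cast at h₂' ⊢
    simp only [map_add, map_natCast, map_one, mul_pow]
    linear_combination (-X ^ n * (1 - X) ^ n) * h₂'
  · simp [majPoly_eval_zero]

section ConcentratedOnCompact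

variable {α E : Type*} [MeasurableSpace α] [TopologicalSpace α] [OpensMeasurableSpace α]
  [T2Space α] [NormedAddCommGroup E] {μ : Measure α} [IsFiniteMeasureOnCompacts μ] {K : Set α}

lemma Continuous.integrable_of_measure_compl_eq_zero (hK : IsCompact K) (hμ : μ Kᶜ = 0)
    {f : α → E} (hf : Continuous f) : Integrable f μ := by
  rw [← Measure.restrict_eq_self_of_ae_mem (ae_iff.2 hμ)]
  exact hf.continuousOn.integrableOn_compact hK

end ConcentratedOnCompact

section Moments

variable {m m₁ m₂ : Measure ℝ} [IsFiniteMeasure m] [IsFiniteMeasure m₁] [IsFiniteMeasure m₂]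
  {a b : ℝ}

lemma integral_eval_eq_of_integral_pow_eq (h₁ : m₁ (Icc a b)ᶜ = 0) (h₂ : m₂ (Icc a b)ᶜ = 0)
    (h : ∀ k : ℕ, ∫ x, x ^ k ∂m₁ = ∫ x, x ^ k ∂m₂) (p : ℝ[X]) :
    ∫ x, p.eval x ∂m₁ = ∫ x, p.eval x ∂m₂ := by
  induction p using Polynomial.induction_on' with
  | add p r hp hr =>
    simp only [eval_add]
    rw [integral_add (p.continuous.integrable_of_measure_compl_eq_zero isCompact_Icc h₁)
        (r.continuous.integrable_of_measure_compl_eq_zero isCompact_Icc h₁),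
      integral_add (p.continuous.integrable_of_measure_compl_eq_zero isCompact_Icc h₂)
        (r.continuous.integrable_of_measure_compl_eq_zero isCompact_Icc h₂), hp, hr]
  | monomial k c => simp only [eval_monomial, integral_const_mul, h k]

lemma abs_integral_sub_le_of_abs_sub_le (hm : m (Icc a b)ᶜ = 0) {f g : ℝ → ℝ}
    (hf : Integrable f m) (hg : Integrable g m) {δ : ℝ} (hfg : ∀ x ∈ Icc a b, |f x - g x| ≤ δ) :
    |∫ x, f x ∂m - ∫ x, g x ∂m| ≤ δ * m.real univ := by
  rw [← integral_sub hf hg, ← Real.norm_eq_abs]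
  refine norm_integral_le_of_norm_le_const ?_
  filter_upwards [ae_iff.2 hm] with x hx using hfg x hx

lemma MeasureTheory.Measure.eq_of_integral_pow_eq (h₁ : m₁ (Icc a b)ᶜ = 0) (h₂ : m₂ (Icc a b)ᶜ = 0)
    (h : ∀ k : ℕ, ∫ x, x ^ k ∂m₁ = ∫ x, x ^ k ∂m₂) : m₁ = m₂ := by
  refine ext_of_forall_integral_eq_of_IsFiniteMeasure fun f => ?_
  refine eq_of_abs_sub_nonpos (le_of_forall_pos_le_add fun ε hε => ?_)
  set C := m₁.real univ + m₂.real univ + 1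
  have hC : 0 < C := by positivity
  obtain ⟨p, hp⟩ := exists_polynomial_near_of_continuousOn a b f f.continuous.continuousOn
    (ε / C) (by positivity)
  have hfp : ∀ x ∈ Icc a b, |f x - p.eval x| ≤ ε / C := fun x hx => by
    rw [abs_sub_comm]; exact (hp x hx).le
  have e₁ := abs_integral_sub_le_of_abs_sub_le h₁ (f.integrable m₁)
    (p.continuous.integrable_of_measure_compl_eq_zero isCompact_Icc h₁) hfp
  have e₂ := abs_integral_sub_le_of_abs_sub_le h₂ (f.integrable m₂)
    (p.continuous.integrable_of_measure_compl_eq_zero isCompact_Icc h₂) hfp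
  rw [integral_eval_eq_of_integral_pow_eq h₁ h₂ h p] at e₁
  calc |∫ x, f x ∂m₁ - ∫ x, f x ∂m₂|
      ≤ ε / C * m₁.real univ + ε / C * m₂.real univ := by
        have := abs_sub_le (∫ x, f x ∂m₁) (∫ x, p.eval x ∂m₂) (∫ x, f x ∂m₂)
        rw [abs_sub_comm (∫ x, p.eval x ∂m₂)] at this
        linarith
    _ ≤ 0 + ε := by
        rw [zero_add, ← mul_add, div_mul_eq_mul_div, div_le_iff₀ hC]
        nlinarith

end Moments

noncomputable def signedMoment (μ : Measure ℝ) (k : ℕ) : ℝ :=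
  ∫ q, (2 * q - 1) * (q * (1 - q)) ^ k ∂μ

section Voting

variable {μ μ₁ μ₂ : Measure ℝ}

lemma voteV_eq_integral_eval (μ : Measure ℝ) (n : ℕ) :
    voteV μ n = ∫ q, (majPoly n).eval q ∂μ := by
  simp only [voteV, majP_eq_eval]

lemma voteV_zero [IsProbabilityMeasure μ] (hμ : μ (Icc 0 1)ᶜ = 0) :
    voteV μ 0 = 1 / 2 + signedMoment μ 0 / 2 := by
  have hint : Integrable (fun q : ℝ => q) μ :=
    continuous_id.integrable_of_measure_compl_eq_zero isCompact_Icc hμ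
  simp only [voteV, majP_zero, signedMoment, pow_zero, mul_one]
  rw [integral_sub (hint.const_mul 2) (integrable_const 1), integral_const_mul]
  simp only [integral_const, probReal_univ, smul_eq_mul, one_mul]
  ring

lemma voteV_succ [IsFiniteMeasureOnCompacts μ] (hμ : μ (Icc 0 1)ᶜ = 0) (n : ℕ) :
    voteV μ (n + 1) = voteV μ n + (2 * n + 1).choose n * signedMoment μ (n + 1) := by
  have hint : ∀ p : ℝ[X], Integrable (fun q => p.eval q) μ := fun p =>
    p.continuous.integrable_of_measure_compl_eq_zero isCompact_Icc hμ
  rw [voteV_eq_integral_eval, voteV_eq_integral_eval, ← sub_eq_iff_eq_add',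
    ← integral_sub (hint _) (hint _), signedMoment, ← integral_const_mul]
  simp_rw [← eval_sub, majPoly_succ_sub]
  simp [mul_assoc]

lemma voteV_eq_iff_signedMoment_eq [IsProbabilityMeasure μ₁] [IsProbabilityMeasure μ₂]
    (h₁ : μ₁ (Icc 0 1)ᶜ = 0) (h₂ : μ₂ (Icc 0 1)ᶜ = 0) :
    (∀ n, voteV μ₁ n = voteV μ₂ n) ↔ ∀ k, signedMoment μ₁ k = signedMoment μ₂ k := by
  constructor
  · intro hV k
    cases k with
    | zero =>
      have := hV 0
      rw [voteV_zero h₁, voteV_zero h₂] at this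
      linarith
    | succ k =>
      have := hV (k + 1)
      rw [voteV_succ h₁, voteV_succ h₂, hV k, add_right_inj] at this
      exact mul_left_cancel₀ (Nat.cast_ne_zero.2 (Nat.choose_pos (by omega)).ne') this
  · intro hm n
    induction n with
    | zero => rw [voteV_zero h₁, voteV_zero h₂, hm]
    | succ n ih => rw [voteV_succ h₁, voteV_succ h₂, ih, hm]

end Voting

noncomputable def signaturePart (μ : Measure ℝ) (g : ℝ → ℝ) : Measure ℝ :=
  ((μ.restrict (Icc 0 1)).withDensity fun q => ENNReal.ofReal (g q)).map fun q => q * (1 - q)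

section Signature

variable {μ μ₁ μ₂ : Measure ℝ}

instance [IsFiniteMeasure μ] : IsFiniteMeasure (signaturePart μ fun q => 2 * q - 1) :=
  have := aux_fin μ (fun q => 2 * q - 1) fun q hq => by linarith [hq.2]
  Measure.isFiniteMeasure_map _ _

instance [IsFiniteMeasure μ] : IsFiniteMeasure (signaturePart μ fun q => 1 - 2 * q) :=
  have := aux_fin μ (fun q => 1 - 2 * q) fun q hq => by linarith [hq.1]
  Measure.isFiniteMeasure_map _ _

lemma signature_eq_iff [IsFiniteMeasure μ₁] [IsFiniteMeasure μ₂] :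
    signature μ₁ = signature μ₂ ↔
      signaturePart μ₁ (fun q => 2 * q - 1) + signaturePart μ₂ (fun q => 1 - 2 * q)
        = signaturePart μ₂ (fun q => 2 * q - 1) + signaturePart μ₁ (fun q => 1 - 2 * q) := by
  rw [← Measure.toSignedMeasure_eq_toSignedMeasure_iff, Measure.toSignedMeasure_add,
    Measure.toSignedMeasure_add, ← sub_eq_sub_iff_add_eq_add]
  rfl

lemma signaturePart_compl_Icc (μ : Measure ℝ) (g : ℝ → ℝ) :
    signaturePart μ g (Icc 0 (1 / 4))ᶜ = 0 := by
  have hs : Measurable fun q : ℝ => q * (1 - q) := by fun_prop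
  have hK : MeasurableSet (Icc (0 : ℝ) (1 / 4))ᶜ := measurableSet_Icc.compl
  have hdisj : (fun q : ℝ => q * (1 - q)) ⁻¹' (Icc 0 (1 / 4))ᶜ ∩ Icc 0 1 = ∅ := by
    ext q
    simp only [mem_inter_iff, mem_preimage, mem_compl_iff, mem_Icc, mem_empty_iff_false,
      iff_false]
    rintro ⟨hout, hq₀, hq₁⟩
    exact hout ⟨by nlinarith, by nlinarith [sq_nonneg (q - 1 / 2)]⟩
  rw [signaturePart, Measure.map_apply hs hK, withDensity_apply _ (hs hK),
    Measure.restrict_restrict (hs hK), hdisj, Measure.restrict_empty, lintegral_zero_measure]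

lemma integral_signaturePart {g : ℝ → ℝ} (hg : Measurable g) {f : ℝ → ℝ} (hf : Measurable f) :
    ∫ x, f x ∂signaturePart μ g = ∫ q in Icc 0 1, max (g q) 0 * f (q * (1 - q)) ∂μ := by
  rw [signaturePart, integral_map (by fun_prop) hf.aestronglyMeasurable,
    integral_withDensity_eq_integral_toReal_smul (by fun_prop)
      (.of_forall fun _ => ENNReal.ofReal_lt_top)]
  simp only [ENNReal.toReal_ofReal', smul_eq_mul]

lemma signedMoment_eq_integral_sub [IsFiniteMeasureOnCompacts μ] (hμ : μ (Icc 0 1)ᶜ = 0) (k : ℕ) :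
    signedMoment μ k = ∫ x, x ^ k ∂signaturePart μ (fun q => 2 * q - 1)
      - ∫ x, x ^ k ∂signaturePart μ (fun q => 1 - 2 * q) := by
  have hres : μ.restrict (Icc 0 1) = μ := Measure.restrict_eq_self_of_ae_mem (ae_iff.2 hμ)
  rw [integral_signaturePart (by fun_prop) (by fun_prop),
    integral_signaturePart (by fun_prop) (by fun_prop),
    ← integral_sub (Continuous.integrableOn_Icc (by fun_prop))
      (Continuous.integrableOn_Icc (by fun_prop)), hres]
  refine integral_congr_ae (.of_forall fun q => ?_)
  simp only
  rw [← sub_mul, show 1 - 2 * q = -(2 * q - 1) by ring, max_zero_sub_max_neg_zero_eq_self]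

lemma Continuous.integrable_signaturePart {g : ℝ → ℝ} [IsFiniteMeasure (signaturePart μ g)]
    {f : ℝ → ℝ} (hf : Continuous f) : Integrable f (signaturePart μ g) :=
  hf.integrable_of_measure_compl_eq_zero isCompact_Icc (signaturePart_compl_Icc μ g)

lemma signedMoment_eq_iff_integral_pow_eq [IsFiniteMeasure μ₁] [IsFiniteMeasure μ₂]
    (h₁ : μ₁ (Icc 0 1)ᶜ = 0) (h₂ : μ₂ (Icc 0 1)ᶜ = 0) (k : ℕ) :
    signedMoment μ₁ k = signedMoment μ₂ k ↔
      ∫ x, x ^ k ∂(signaturePart μ₁ (fun q => 2 * q - 1) + signaturePart μ₂ (fun q => 1 - 2 * q))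
        = ∫ x, x ^ k ∂(signaturePart μ₂ (fun q => 2 * q - 1)
          + signaturePart μ₁ (fun q => 1 - 2 * q)) := by
  have hpow : ∀ (μ : Measure ℝ) (g : ℝ → ℝ) [IsFiniteMeasure (signaturePart μ g)],
      Integrable (fun x => x ^ k) (signaturePart μ g) := fun _ _ _ =>
    (continuous_pow k).integrable_signaturePart
  rw [signedMoment_eq_integral_sub h₁, signedMoment_eq_integral_sub h₂, sub_eq_sub_iff_add_eq_add,
    integral_add_measure (hpow _ _) (hpow _ _), integral_add_measure (hpow _ _) (hpow _ _)]

lemma signaturePart_add_signaturePart_compl_Icc (μ μ' : Measure ℝ) (g g' : ℝ → ℝ) :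
    (signaturePart μ g + signaturePart μ' g') (Icc 0 (1 / 4))ᶜ = 0 := by
  rw [Measure.add_apply, signaturePart_compl_Icc, signaturePart_compl_Icc, add_zero]

end Signature

/-- Two probability laws on `[0,1]` have the same odd-budget majority voting curve
iff their signed voting signatures coincide. -/
theorem stmt5 (μ₁ μ₂ : Measure ℝ) [IsProbabilityMeasure μ₁] [IsProbabilityMeasure μ₂]
    (h₁ : μ₁ (Set.Icc (0:ℝ) 1)ᶜ = 0) (h₂ : μ₂ (Set.Icc (0:ℝ) 1)ᶜ = 0) :
    (∀ n : ℕ, voteV μ₁ n = voteV μ₂ n) ↔ signature μ₁ = signature μ₂ := by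
  rw [voteV_eq_iff_signedMoment_eq h₁ h₂, signature_eq_iff,
    forall_congr' (signedMoment_eq_iff_integral_pow_eq h₁ h₂)]
  exact ⟨Measure.eq_of_integral_pow_eq (signaturePart_add_signaturePart_compl_Icc _ _ _ _)
    (signaturePart_add_signaturePart_compl_Icc _ _ _ _), fun h k => by rw [h]⟩
end

section
/- For any probability measure Π on [0,1] and integers m > n ≥ 0, |V_m(Π) − V_n(Π)| ≤ ‖ω_Π‖_TV · Σ_{k=n}^{m−1} C(2k+1, k+1) 4^{−(k+1)}, and consequently |V_m(Π) − V_n(Π)| ≤ min{1, ‖ω_Π‖_TV (√m − √n)/√π}. -/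
open MeasureTheory

/-! Conditioning on the last two of `2n + 3` voters gives
`P_{n+1}(q) - P_n(q) = C(2n+1, n+1) (q(1-q))^(n+1) (2q - 1)`. After the change of variables
`t = q(1-q)`, the increment `V_{k+1} - V_k` is `C(2k+1, k+1)` times the integral of `t^(k+1)`
against `ω_Π`, which is carried by `[0, 1/4]`; so it is at most `C(2k+1, k+1) 4^-(k+1) ‖ω_Π‖_TV`,
and the first bound follows by telescoping. The central binomial estimate
`C(2k+1, k+1) 4^-(k+1) ≤ 1 / (2 √(π (k+1)))` is the lower bound `(2k+1)/(2k+2) · π/2 ≤ W_k`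
for the partial Wallis products, and `V_n ∈ [0, 1]` gives the bound `1`. -/

noncomputable def binomTerm (N j : ℕ) (q : ℝ) : ℝ :=
  (N.choose j : ℝ) * q ^ j * (1 - q) ^ (N - j)

noncomputable def binomTail (N a : ℕ) (q : ℝ) : ℝ :=
  ∑ j ∈ Finset.Ico a (N + 1), binomTerm N j q

lemma binomTerm_succ_succ (N j : ℕ) (q : ℝ) :
    binomTerm (N + 1) (j + 1) q = q * binomTerm N j q + (1 - q) * binomTerm N (j + 1) q := by
  simp only [binomTerm, Nat.choose_succ_succ, Nat.cast_add, Nat.add_sub_add_right]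
  rcases lt_or_ge j N with hj | hj
  · obtain ⟨d, rfl⟩ := Nat.exists_eq_add_of_lt hj
    rw [show j + d + 1 - j = d + 1 by omega, show j + d + 1 - (j + 1) = d by omega]
    ring
  · rw [Nat.choose_eq_zero_of_lt (by omega : N < j + 1), Nat.sub_eq_zero_of_le hj]
    ring

lemma binomTail_succ_succ (N a : ℕ) (q : ℝ) :
    binomTail (N + 1) (a + 1) q = q * binomTail N a q + (1 - q) * binomTail N (a + 1) q := by
  rcases le_or_gt a N with ha | ha
  · have hshift : binomTail N (a + 1) q = ∑ j ∈ Finset.Ico a (N + 1), binomTerm N (j + 1) q := by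
      rw [Finset.sum_Ico_add' (fun j => binomTerm N j q), Finset.sum_Ico_succ_top (by omega)]
      simp [binomTail, binomTerm]
    rw [hshift, binomTail, binomTail, ← Finset.sum_Ico_add' (fun j => binomTerm (N + 1) j q),
      Finset.mul_sum, Finset.mul_sum, ← Finset.sum_add_distrib]
    exact Finset.sum_congr rfl fun j _ => binomTerm_succ_succ N j q
  · simp [binomTail, Finset.Ico_eq_empty_of_le (by omega : N + 1 ≤ a),
      Finset.Ico_eq_empty_of_le (by omega : N + 1 ≤ a + 1),
      Finset.Ico_eq_empty_of_le (by omega : N + 1 + 1 ≤ a + 1)]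

lemma binomTail_eq_binomTerm_add (N a : ℕ) (q : ℝ) :
    binomTail N a q = binomTerm N a q + binomTail N (a + 1) q := by
  rcases le_or_gt a N with ha | ha
  · exact Finset.sum_eq_sum_Ico_succ_bot (by omega) _
  · simp [binomTail, binomTerm, Nat.choose_eq_zero_of_lt ha,
      Finset.Ico_eq_empty_of_le (by omega : N + 1 ≤ a),
      Finset.Ico_eq_empty_of_le (by omega : N + 1 ≤ a + 1)]

lemma binomTail_zero (N : ℕ) (q : ℝ) : binomTail N 0 q = 1 := by
  have h := add_pow q (1 - q) N
  rw [add_sub_cancel, one_pow] at h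
  rw [binomTail, ← Finset.range_eq_Ico, h]
  exact Finset.sum_congr rfl fun j _ => by rw [binomTerm]; ring

lemma binomTerm_nonneg (N j : ℕ) {q : ℝ} (hq : q ∈ Set.Icc (0 : ℝ) 1) : 0 ≤ binomTerm N j q := by
  have := sub_nonneg.2 hq.2
  have := hq.1
  unfold binomTerm
  positivity

lemma binomTail_mem_Icc (N a : ℕ) {q : ℝ} (hq : q ∈ Set.Icc (0 : ℝ) 1) :
    binomTail N a q ∈ Set.Icc (0 : ℝ) 1 := by
  refine ⟨Finset.sum_nonneg fun j _ => binomTerm_nonneg N j hq, ?_⟩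
  rw [← binomTail_zero N q]
  exact Finset.sum_le_sum_of_subset_of_nonneg (Finset.Ico_subset_Ico_left (Nat.zero_le a))
    fun j _ _ => binomTerm_nonneg N j hq

lemma majP_eq_binomTail (n : ℕ) (q : ℝ) : majP n q = binomTail (2 * n + 1) (n + 1) q := by
  rw [majP, binomTail, Finset.Ico_add_one_right_eq_Icc]
  rfl

lemma majP_succ_sub (n : ℕ) (q : ℝ) :
    majP (n + 1) q - majP n q =
      ((2 * n + 1).choose (n + 1) : ℝ) * (q * (1 - q)) ^ (n + 1) * (2 * q - 1) := by
  have hlast₁ : majP (n + 1) q = q * binomTail (2 * n + 2) (n + 1) q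
      + (1 - q) * binomTail (2 * n + 2) (n + 2) q := binomTail_succ_succ (2 * n + 2) (n + 1) q
  have hpeel₁ : binomTail (2 * n + 2) (n + 1) q = binomTerm (2 * n + 2) (n + 1) q
      + binomTail (2 * n + 2) (n + 2) q := binomTail_eq_binomTerm_add (2 * n + 2) (n + 1) q
  have hlast₂ : binomTail (2 * n + 2) (n + 2) q = q * majP n q
      + (1 - q) * binomTail (2 * n + 1) (n + 2) q := binomTail_succ_succ (2 * n + 1) (n + 1) q
  have hpeel₂ : majP n q = binomTerm (2 * n + 1) (n + 1) q + binomTail (2 * n + 1) (n + 2) q :=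
    binomTail_eq_binomTerm_add (2 * n + 1) (n + 1) q
  have hcentral : ((2 * n + 2).choose (n + 1) : ℝ) = 2 * (2 * n + 1).choose (n + 1) := by
    rw [Nat.choose_succ_succ, ← Nat.choose_symm_half]; push_cast; ring
  simp only [binomTerm, show 2 * n + 2 - (n + 1) = n + 1 by omega,
    show 2 * n + 1 - (n + 1) = n by omega, hcentral] at hpeel₁ hpeel₂
  rw [mul_pow]
  linear_combination hlast₁ + q * hpeel₁ + hlast₂ - (1 - q) * hpeel₂

open Real Nat in
lemma sq_choose_mul_quarter_pow_mul_W (k : ℕ) :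
    (((2 * k + 1).choose (k + 1) : ℝ) * (1 / 4) ^ (k + 1)) ^ 2 * Wallis.W k
      = (2 * k + 1) / (16 * (k + 1) ^ 2) := by
  have hfac := Nat.choose_mul_factorial_mul_factorial (show k + 1 ≤ 2 * k + 1 by omega)
  rw [show 2 * k + 1 - (k + 1) = k by omega, Nat.factorial_succ, Nat.factorial_succ] at hfac
  have hC : ((2 * k + 1).choose (k + 1) : ℝ) =
      (2 * k + 1) * (2 * k)! / ((k + 1) * (k ! : ℝ) ^ 2) := by
    rw [eq_div_iff (by positivity)]
    exact_mod_cast (by rw [← hfac]; ring : _)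
  have h16 : (2 : ℝ) ^ (4 * k) = (4 ^ k) ^ 2 := by
    rw [← pow_mul, show (4 : ℝ) = 2 ^ 2 by norm_num, ← pow_mul]; ring_nf
  rw [hC, Wallis.W_eq_factorial_ratio, h16, one_div_pow]
  field_simp
  ring

lemma one_div_two_sqrt_le_sqrt_sub_sqrt {x : ℝ} (hx : 0 ≤ x) :
    1 / (2 * √(x + 1)) ≤ √(x + 1) - √x := by
  have h1 : 0 < √(x + 1) := Real.sqrt_pos.2 (by linarith)
  have hsq1 := Real.sq_sqrt (by linarith : 0 ≤ x + 1)
  have hsq := Real.sq_sqrt hx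
  rw [div_le_iff₀ (by positivity)]
  nlinarith [Real.sqrt_nonneg x, Real.sqrt_le_sqrt (by linarith : x ≤ x + 1)]

open Real in
lemma choose_mul_quarter_pow_le (k : ℕ) :
    ((2 * k + 1).choose (k + 1) : ℝ) * (1 / 4) ^ (k + 1) ≤ 1 / (2 * √(π * (k + 1))) := by
  set c : ℝ := ((2 * k + 1).choose (k + 1) : ℝ) * (1 / 4) ^ (k + 1)
  have hW := Wallis.W_pos k
  have hkey : 4 * c ^ 2 * π * (k + 1) ≤ 1 := by
    refine le_of_mul_le_mul_right ?_ hW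
    calc 4 * c ^ 2 * π * (k + 1) * Wallis.W k = 4 * π * (k + 1) * (c ^ 2 * Wallis.W k) := by ring
      _ = (2 * k + 1) / (2 * k + 2) * (π / 2) := by
        rw [sq_choose_mul_quarter_pow_mul_W]; field_simp; ring
      _ ≤ 1 * Wallis.W k := by rw [one_mul]; exact Wallis.le_W k
  have hc : 0 ≤ c := by positivity
  clear_value c
  rw [le_div_iff₀ (by positivity), ← pow_le_one_iff_of_nonneg (by positivity) two_ne_zero, mul_pow,
    mul_pow, Real.sq_sqrt (by positivity)]
  linarith

section SignedIntegral

variable {α : Type*} [MeasurableSpace α]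

lemma abs_sInt_le (s : SignedMeasure α) {g : α → ℝ} {M : ℝ} (hgM : ∀ x, |g x| ≤ M) :
    |sInt s g| ≤ M * (s.totalVariation Set.univ).toReal := by
  have hbound : ∀ (ν : Measure α) [IsFiniteMeasure ν], |∫ x, g x ∂ν| ≤ M * (ν Set.univ).toReal :=
    fun ν _ => norm_integral_le_of_norm_le_const (f := g) (μ := ν) (.of_forall hgM)
  rw [sInt, SignedMeasure.totalVariation, Measure.add_apply,
    ENNReal.toReal_add (measure_ne_top _ _) (measure_ne_top _ _), mul_add]
  exact (abs_sub _ _).trans (add_le_add (hbound _) (hbound _))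

lemma sInt_toSignedMeasure_sub (A B : Measure α) [IsFiniteMeasure A] [IsFiniteMeasure B]
    {g : α → ℝ} (hg : Measurable g) {M : ℝ} (hgM : ∀ x, |g x| ≤ M) :
    sInt (A.toSignedMeasure - B.toSignedMeasure) g = ∫ x, g x ∂A - ∫ x, g x ∂B := by
  set s := A.toSignedMeasure - B.toSignedMeasure
  have hint : ∀ (ν : Measure α) [IsFiniteMeasure ν], Integrable g ν := fun ν _ =>
    Integrable.of_bound hg.aestronglyMeasurable M (Filter.Eventually.of_forall hgM)
  have hJordan : s.toJordanDecomposition.posPart + B = A + s.toJordanDecomposition.negPart := by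
    rw [← Measure.toSignedMeasure_eq_toSignedMeasure_iff, Measure.toSignedMeasure_add,
      Measure.toSignedMeasure_add, ← sub_eq_sub_iff_add_eq_add]
    exact s.toSignedMeasure_toJordanDecomposition
  have h := congrArg (fun ν => ∫ x, g x ∂ν) hJordan
  simp only [integral_add_measure (hint _) (hint _)] at h
  rw [sInt]
  linarith

end SignedIntegral

lemma sInt_signature (μ : Measure ℝ) [IsFiniteMeasure μ] {g : ℝ → ℝ} (hg : Measurable g) {M : ℝ}
    (hgM : ∀ t, |g t| ≤ M) :
    sInt (signature μ) g = ∫ q in Set.Icc 0 1, g (q * (1 - q)) * (2 * q - 1) ∂μ := by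
  have hφ : Measurable fun q : ℝ => q * (1 - q) := by fun_prop
  have hgφ : ∀ᵐ q ∂μ.restrict (Set.Icc 0 1), ‖g (q * (1 - q))‖ ≤ M :=
    Filter.Eventually.of_forall fun q => hgM _
  have hint : ∀ h : ℝ → ℝ, Continuous h →
      Integrable (fun q => max (h q) 0 * g (q * (1 - q))) (μ.restrict (Set.Icc 0 1)) :=
    fun h hh => (hh.max continuous_const).integrableOn_Icc.mul_bdd
      (hg.comp hφ).aestronglyMeasurable hgφ
  have := aux_fin μ (fun q => 2 * q - 1) fun q hq => by linarith [hq.2]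
  have := aux_fin μ (fun q => 1 - 2 * q) fun q hq => by linarith [hq.1]
  rw [signature, sInt_toSignedMeasure_sub _ _ hg hgM,
    integral_map hφ.aemeasurable hg.aestronglyMeasurable,
    integral_map hφ.aemeasurable hg.aestronglyMeasurable,
    integral_withDensity_eq_integral_toReal_smul (by fun_prop)
      (Filter.Eventually.of_forall fun _ => ENNReal.ofReal_lt_top),
    integral_withDensity_eq_integral_toReal_smul (by fun_prop)
      (Filter.Eventually.of_forall fun _ => ENNReal.ofReal_lt_top)]
  simp only [ENNReal.toReal_ofReal', smul_eq_mul]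
  rw [← integral_sub (hint _ (by fun_prop)) (hint _ (by fun_prop))]
  congr 1 with q
  rw [← sub_mul, show 1 - 2 * q = -(2 * q - 1) by ring, max_zero_sub_max_neg_zero_eq_self, mul_comm]

lemma integrable_majP (μ : Measure ℝ) [IsFiniteMeasure μ] (hμ : ∀ᵐ q ∂μ, q ∈ Set.Icc (0 : ℝ) 1)
    (n : ℕ) : Integrable (majP n) μ := by
  rw [← Measure.restrict_eq_self_of_ae_mem hμ]
  exact (by unfold majP; fun_prop : Continuous (majP n)).integrableOn_Icc

lemma voteV_mem_Icc (μ : Measure ℝ) [IsProbabilityMeasure μ] (hμ : ∀ᵐ q ∂μ, q ∈ Set.Icc (0 : ℝ) 1)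
    (n : ℕ) : voteV μ n ∈ Set.Icc (0 : ℝ) 1 := by
  have hae : ∀ᵐ q ∂μ, majP n q ∈ Set.Icc (0 : ℝ) 1 :=
    hμ.mono fun q hq => majP_eq_binomTail n q ▸ binomTail_mem_Icc _ _ hq
  refine ⟨integral_nonneg_of_ae (hae.mono fun _ h => h.1), ?_⟩
  calc voteV μ n ≤ ∫ _, (1 : ℝ) ∂μ :=
        integral_mono_ae (integrable_majP μ hμ n) (integrable_const 1) (hae.mono fun _ h => h.2)
    _ = 1 := by simp

lemma abs_min_abs_pow_le {c : ℝ} (hc : 0 ≤ c) (k : ℕ) (t : ℝ) : |min |t| c ^ k| ≤ c ^ k := by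
  rw [abs_pow, abs_of_nonneg (le_min (abs_nonneg t) hc)]
  exact pow_le_pow_left₀ (le_min (abs_nonneg t) hc) (min_le_right _ _) _

/- `ω_Π` is carried by `[0, 1/4]`, so truncating `t ^ (k + 1)` there changes nothing and gives a
bounded test function. -/
lemma voteV_succ_sub (μ : Measure ℝ) [IsFiniteMeasure μ] (hμ : ∀ᵐ q ∂μ, q ∈ Set.Icc (0 : ℝ) 1)
    (k : ℕ) :
    voteV μ (k + 1) - voteV μ k =
      ((2 * k + 1).choose (k + 1) : ℝ) * sInt (signature μ) fun t => min |t| (1 / 4) ^ (k + 1) := by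
  have hclamp : Set.EqOn (fun q : ℝ => min |q * (1 - q)| (1 / 4) ^ (k + 1) * (2 * q - 1))
      (fun q => (q * (1 - q)) ^ (k + 1) * (2 * q - 1)) (Set.Icc 0 1) := fun q hq => by
    dsimp only
    rw [abs_of_nonneg (mul_nonneg hq.1 (sub_nonneg.2 hq.2)),
      min_eq_left (by nlinarith [sq_nonneg (q - 1 / 2)])]
  rw [sInt_signature μ (by fun_prop) (abs_min_abs_pow_le (by norm_num) (k + 1)),
    setIntegral_congr_fun measurableSet_Icc hclamp, Measure.restrict_eq_self_of_ae_mem hμ,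
    voteV, voteV,
    ← integral_sub (integrable_majP μ hμ _) (integrable_majP μ hμ _), ← integral_const_mul]
  congr 1 with q
  rw [majP_succ_sub]
  ring

lemma abs_voteV_succ_sub_le (μ : Measure ℝ) [IsFiniteMeasure μ]
    (hμ : ∀ᵐ q ∂μ, q ∈ Set.Icc (0 : ℝ) 1) (k : ℕ) :
    |voteV μ (k + 1) - voteV μ k| ≤
      sigTV μ * (((2 * k + 1).choose (k + 1) : ℝ) * (1 / 4) ^ (k + 1)) := by
  rw [voteV_succ_sub μ hμ, abs_mul, Nat.abs_cast]
  calc _ ≤ ((2 * k + 1).choose (k + 1) : ℝ) * ((1 / 4) ^ (k + 1) * sigTV μ) := by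
        gcongr; exact abs_sInt_le _ (abs_min_abs_pow_le (by norm_num) (k + 1))
    _ = _ := by ring

open Real in
lemma choose_mul_quarter_pow_le_sqrt_sub (k : ℕ) :
    ((2 * k + 1).choose (k + 1) : ℝ) * (1 / 4) ^ (k + 1) ≤ (√(k + 1) - √k) / √π :=
  calc _ ≤ 1 / (2 * √(π * (k + 1))) := choose_mul_quarter_pow_le k
    _ = 1 / (2 * √(k + 1)) / √π := by rw [sqrt_mul pi_pos.le]; field_simp
    _ ≤ (√(k + 1) - √k) / √π := by gcongr; exact one_div_two_sqrt_le_sqrt_sub_sqrt k.cast_nonneg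

/-- Distribution-free budget-to-budget variation bound for the voting curve. -/
theorem stmt9 (μ : Measure ℝ) [IsProbabilityMeasure μ] (hμ : μ (Set.Icc (0:ℝ) 1)ᶜ = 0)
    (m n : ℕ) (hmn : n < m) :
    |voteV μ m - voteV μ n| ≤
      sigTV μ * ∑ k ∈ Finset.Ico n m, ((2*k+1).choose (k+1) : ℝ) * (1/4)^(k+1) ∧
    |voteV μ m - voteV μ n| ≤
      min 1 (sigTV μ * (Real.sqrt m - Real.sqrt n) / Real.sqrt Real.pi) := by
  have hsum : |voteV μ m - voteV μ n| ≤
      sigTV μ * ∑ k ∈ Finset.Ico n m, ((2*k+1).choose (k+1) : ℝ) * (1/4)^(k+1) := by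
    rw [← Finset.sum_Ico_sub (f := voteV μ) hmn.le, Finset.mul_sum]
    exact (Finset.abs_sum_le_sum_abs _ _).trans
      (Finset.sum_le_sum fun k _ => abs_voteV_succ_sub_le μ hμ k)
  have hsqrt : ∑ k ∈ Finset.Ico n m, ((2*k+1).choose (k+1) : ℝ) * (1/4)^(k+1) ≤
      (Real.sqrt m - Real.sqrt n) / Real.sqrt Real.pi := by
    rw [← Finset.sum_Ico_sub (f := fun k : ℕ => Real.sqrt k) hmn.le, Finset.sum_div]
    gcongr with k
    exact_mod_cast choose_mul_quarter_pow_le_sqrt_sub k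
  obtain ⟨hm0, hm1⟩ := voteV_mem_Icc μ hμ m
  obtain ⟨hn0, hn1⟩ := voteV_mem_Icc μ hμ n
  refine ⟨hsum, le_min (abs_sub_le_iff.2 ⟨by linarith, by linarith⟩) (hsum.trans ?_)⟩
  rw [mul_div_assoc]
  exact mul_le_mul_of_nonneg_left hsqrt ENNReal.toReal_nonneg
end
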